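/- arXiv:0907.0343 — 2 statements merged into one kernel-verified Lean document; each statement's English description precedes it below -/
import Mathlib

section
/- Let K be an uncountable field of cardinality m > ℵ₀ with transcendence basis {t_i : i < m} over its prime field K₀. Then there exists a valuation v on K₀(t_i : i < m) such that v(t_1) = 1 and v(t_j) > v(t_i) whenever j < i, and consequently the open balls B_i = {x : v(x - t_i) > 1} for i < m are pairwise disjoint. -/
/-- A valuation on `K` with unspecified value group. -/
structure ValuationOn (K : Type) [Field K] where
  Γ : Type
  [inst : LinearOrderedCommGroupWithZero Γ]
  v : @Valuation K Γ inst.toLinearOrderedCommMonoidWithZero _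

attribute [instance] ValuationOn.inst

/-!
Let `k` be the prime field. Sending `t i` to the Hahn series `T ^ eᵢ`, where `eᵢ = single i 1` in
the lexicographically ordered group `ι →₀ ℤ`, embeds `k(t i : i ∈ ι)` into a field with the
valuation `ord`, under which `ord (t j) = eⱼ > eᵢ = ord (t i) > 0` for `j < i`. By Chevalley's
extension theorem this valuation extends from `k(t i : i ∈ ι)` to `K`. The balls are then disjoint by the ultrametric inequality:
a common point of the balls around `t i` and `t j` would make `v (t i - t j)` smaller than
`v (t i₁)`, whereas `v (t i - t j) = max (v (t i)) (v (t j)) ≥ v (t i₁)`.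
-/

open IsLocalRing MvPolynomial

theorem Valuation.exists_valuationSubring_lt_one_of_lt_one {F L Γ : Type*} [Field F] [Field L]
    [LinearOrderedCommGroupWithZero Γ] (v : Valuation F Γ) (φ : F →+* L) :
    ∃ B : ValuationSubring L, ∀ x, v x < 1 → B.valuation (φ x) < 1 := by
  obtain ⟨B, hφB, hloc⟩ :=
    IsLocalRing.exists_factor_valuationRing (φ.comp v.valuationSubring.subtype)
  have : IsLocalRing B.toSubring := inferInstanceAs (IsLocalRing B)
  refine ⟨B, fun x hx => ?_⟩
  have hxO : x ∈ v.valuationSubring := hx.le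
  have hmax : (⟨x, hxO⟩ : v.valuationSubring) ∈ maximalIdeal v.valuationSubring := by
    rw [ValuationSubring.valuation_lt_one_iff]
    exact v.isEquiv_valuation_valuationSubring.lt_one_iff_lt_one.1 hx
  exact (B.valuation_lt_one_iff _).1 (map_nonunit (RingHom.codRestrict _ _ hφB) _ hmax)

theorem Valuation.pairwise_disjoint_balls_of_strictMono {K Γ ι : Type*} [Ring K]
    [LinearOrderedCommMonoidWithZero Γ] [LinearOrder ι] (v : Valuation K Γ) {t : ι → K}
    (ht : StrictMono (v ∘ t)) {r : Γ} (hr : ∀ i, r ≤ v (t i)) :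
    Pairwise fun i j => Disjoint {x | v (x - t i) < r} {x | v (x - t j) < r} := by
  refine (Std.Symm.pairwise_on (r := Disjoint) fun i => {x | v (x - t i) < r}).2 ?_
  intro j i hji
  refine Set.disjoint_left.2 fun x hxj hxi => (hr i).not_gt ?_
  calc v (t i) = v (t i - t j) := (v.map_sub_eq_of_lt_left (ht hji)).symm
    _ = v ((x - t j) - (x - t i)) := by rw [sub_sub_sub_cancel_left]
    _ ≤ max (v (x - t j)) (v (x - t i)) := v.map_sub _ _
    _ < r := max_lt hxj hxi

theorem AddValuation.toValuation_lt_one_iff {R Γ₀ : Type*} [Ring R]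
    [LinearOrderedAddCommMonoidWithTop Γ₀] (v : AddValuation R Γ₀) {x : R} :
    v.toValuation x < 1 ↔ 0 < v x := by
  rw [toValuation_apply]
  exact Multiplicative.ofAdd_lt.trans OrderDual.toDual_lt_toDual

namespace Finsupp.Lex

variable {ι N : Type*} [LinearOrder ι] [Zero N] [LinearOrder N] {n : N}

theorem toLex_single_pos (i : ι) (hn : 0 < n) : 0 < toLex (single i n) :=
  lt_iff.2 ⟨i, fun j hj => by simp [single_eq_of_ne hj.ne], by simpa⟩

theorem toLex_single_strictAnti (hn : 0 < n) : StrictAnti fun i : ι => toLex (single i n) :=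
  fun j i hji => lt_iff.2 ⟨j, fun l hl => by
    simp [single_eq_of_ne hl.ne, single_eq_of_ne (hl.trans hji).ne],
    by simpa [single_eq_of_ne hji.ne]⟩

end Finsupp.Lex

section HahnSeriesEmbedding

variable {ι k : Type*}

noncomputable def lexExponent (m : ι →₀ ℕ) : Lex (ι →₀ ℤ) :=
  toLex (Finsupp.mapRange.addMonoidHom (Nat.castAddMonoidHom ℤ) m)

theorem lexExponent_injective : Function.Injective (lexExponent (ι := ι)) := fun _ _ h =>
  Finsupp.mapRange_injective _ Nat.cast_zero Nat.cast_injective (toLex.injective h)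

theorem lexExponent_single_add (i : ι) (n : ℕ) (m : ι →₀ ℕ) :
    lexExponent (Finsupp.single i n + m) = n • toLex (Finsupp.single i 1) + lexExponent m := by
  simp only [lexExponent, map_add, toLex_add]
  congr 1
  show toLex _ = toLex (n • Finsupp.single i (1 : ℤ))
  simp [Finsupp.smul_single]

variable [CommRing k] [LinearOrder ι]

variable (k) in
noncomputable def MvPolynomial.toHahnSeries :
    MvPolynomial ι k →ₐ[k] HahnSeries (Lex (ι →₀ ℤ)) k :=
  aeval fun i => HahnSeries.single (toLex (Finsupp.single i 1)) 1

theorem MvPolynomial.toHahnSeries_monomial (m : ι →₀ ℕ) (c : k) :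
    toHahnSeries k (monomial m c) = HahnSeries.single (lexExponent m) c := by
  induction m using Finsupp.induction generalizing c with
  | zero =>
    simp only [toHahnSeries, monomial_zero', aeval_C, lexExponent, map_zero, toLex_zero]
    rw [← HahnSeries.C_eq_algebraMap, HahnSeries.C_apply]
  | single_add i n m _ _ ih =>
    rw [← one_mul c, ← monomial_mul, ← X_pow_eq_monomial, map_mul, ih, map_pow, toHahnSeries,
      aeval_X, HahnSeries.single_pow, one_pow, HahnSeries.single_mul_single, one_mul,
      lexExponent_single_add]

theorem MvPolynomial.coeff_toHahnSeries (p : MvPolynomial ι k) (m : ι →₀ ℕ) :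
    (toHahnSeries k p).coeff (lexExponent m) = p.coeff m := by
  induction p using MvPolynomial.induction_on' with
  | monomial m' c =>
    simp [toHahnSeries_monomial, HahnSeries.coeff_single, coeff_monomial,
      lexExponent_injective.eq_iff, eq_comm]
  | add p q hp hq => simp [hp, hq]

theorem MvPolynomial.toHahnSeries_injective : Function.Injective (toHahnSeries k (ι := ι)) := by
  refine (injective_iff_map_eq_zero _).2 fun p hp => ?_
  ext m
  rw [← coeff_toHahnSeries, hp, HahnSeries.coeff_zero, coeff_zero]

end HahnSeriesEmbedding

theorem exists_valuationSubring_strictMono_of_algebraicIndependent {k K ι : Type*} [Field k]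
    [Field K] [Algebra k K] [LinearOrder ι] {t : ι → K} (ht : AlgebraicIndependent k t) :
    ∃ B : ValuationSubring K, (∀ i, B.valuation (t i) < 1) ∧
      StrictMono fun i => B.valuation (t i) := by
  let F := FractionRing (MvPolynomial ι k)
  let φ : F →+* K := IsFractionRing.lift (g := (aeval (R := k) t).toRingHom) ht
  let ψ : F →+* HahnSeries (Lex (ι →₀ ℤ)) k :=
    IsFractionRing.lift (g := (toHahnSeries k).toRingHom) toHahnSeries_injective
  let v := (HahnSeries.addVal (Lex (ι →₀ ℤ)) k).toValuation.comap ψ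
  obtain ⟨B, hB⟩ := v.exists_valuationSubring_lt_one_of_lt_one φ
  let x : ι → F := fun i => algebraMap (MvPolynomial ι k) F (X i)
  have hφx (i : ι) : φ (x i) = t i := by simp [φ, x]
  have hψx (i : ι) : ψ (x i) = HahnSeries.single (toLex (Finsupp.single i 1)) 1 := by
    simp [ψ, x, toHahnSeries]
  have hv {a : Lex (ι →₀ ℤ)} (ha : 0 < a) :
      (HahnSeries.addVal _ k).toValuation (HahnSeries.single a 1) < 1 := by
    rw [AddValuation.toValuation_lt_one_iff, HahnSeries.addVal_apply_of_ne (by simp),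
      HahnSeries.order_single one_ne_zero]
    exact WithTop.coe_pos.2 ha
  refine ⟨B, fun i => ?_, fun j i hji => ?_⟩
  · simpa [hφx] using
      hB (x i) (by simpa [v, hψx] using hv (Finsupp.Lex.toLex_single_pos i one_pos))
  · have hlt := hB (x j / x i) (by
      simpa [v, hψx] using hv (sub_pos.2 (Finsupp.Lex.toLex_single_strictAnti one_pos hji)))
    rwa [map_div₀, hφx, hφx, map_div₀, div_lt_one₀] at hlt
    exact zero_lt_iff.2 ((B.valuation.ne_zero_iff).2 (ht.ne_zero i))

theorem exists_valuation_disjoint_balls_general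
    {K ι : Type} [Field K] [LinearOrder ι]
    (t : ι → K) (hbasis : IsTranscendenceBasis (⊥ : Subfield K) t)
    (i₁ : ι) (hleast : ∀ i, i₁ ≤ i) :
    ∃ w : ValuationOn K,
      w.v (t i₁) ≠ 0 ∧ w.v (t i₁) < 1 ∧
      (∀ i j : ι, j < i → w.v (t j) < w.v (t i)) ∧
      Pairwise fun i i' : ι =>
        Disjoint {x : K | w.v (x - t i) < w.v (t i₁)}
          {x : K | w.v (x - t i') < w.v (t i₁)} := by
  obtain ⟨B, hlt, hmono⟩ :=
    exists_valuationSubring_strictMono_of_algebraicIndependent hbasis.1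
  refine ⟨⟨B.ValueGroup, B.valuation⟩, B.valuation.ne_zero_iff.2 (hbasis.1.ne_zero i₁),
    hlt i₁, fun _ _ hji => hmono hji, ?_⟩
  exact B.valuation.pairwise_disjoint_balls_of_strictMono hmono
    fun i => hmono.monotone (hleast i)

/-- Let `K` be an uncountable field of cardinality `m > ℵ₀` with a
transcendence basis `{t i : i : ι}` over its prime field, where `ι` is a well-ordered
index set of cardinality `m` with least element `i₁`.  Then there is a valuation `v` on
`K` such that (multiplicatively written) `v (t i₁)` is a nonzero value `< 1`
(additively: `v(t_{i₁}) = 1 > 0`), `v (t j) < v (t i)` whenever `j < i`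
(additively: `v(t_j) > v(t_i)`), and consequently the open balls
`B_i = {x : v (x - t i) < v (t i₁)}` (additively: `v(x - t_i) > 1`) are pairwise
disjoint. -/
theorem exists_valuation_disjoint_balls
    {K ι : Type} [Field K] [LinearOrder ι] [WellFoundedLT ι]
    (hbig : Cardinal.aleph0 < Cardinal.mk K) (hcard : Cardinal.mk ι = Cardinal.mk K)
    (t : ι → K) (hbasis : IsTranscendenceBasis (⊥ : Subfield K) t)
    (i₁ : ι) (hleast : ∀ i, i₁ ≤ i) :
    ∃ w : ValuationOn K,
      w.v (t i₁) ≠ 0 ∧ w.v (t i₁) < 1 ∧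
      (∀ i j : ι, j < i → w.v (t j) < w.v (t i)) ∧
      Pairwise fun i i' : ι =>
        Disjoint {x : K | w.v (x - t i) < w.v (t i₁)}
          {x : K | w.v (x - t i') < w.v (t i₁)} :=
  exists_valuation_disjoint_balls_general t hbasis i₁ hleast
end

section
/- Let E be a field of characteristic p > 0 and F/E a Galois extension of degree p. Then there exists a₀ ∈ E such that for every a ∈ a₀ + {c^p − c : c ∈ E} and every x with x^p − x = a, one has F = E(x). -/
/-!
Let σ generate `Gal(F/E)`, a group of order `p`. The operator `σ - 1` is nilpotent, since
`(σ - 1)^p = σ^p - 1 = 0` in characteristic `p`, and its kernel is `E`; so `1` lies in its range,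
i.e. `σ x = x + 1` for some `x` (additive Hilbert 90). Then `a₀ = x^p - x` is fixed by σ, hence
lies in `E`. If `y^p - y = a₀ + c^p - c`, then `y - x - c` is a root of `X^p - X`, so it lies in
`𝔽_p` and is fixed by σ; hence `σ y = y + 1`, so `y ∉ E`, and `y` generates `F` because `[F : E]`
is prime.
-/

open IntermediateField

theorem LinearMap.mem_range_of_isNilpotent_of_ker_le_span {K V : Type*} [DivisionRing K]
    [AddCommGroup V] [Module K V] {T : Module.End K V} (hT : IsNilpotent T) (hT0 : T ≠ 0)
    {v : V} (hker : LinearMap.ker T ≤ K ∙ v) : v ∈ LinearMap.range T := by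
  nontriviality V
  obtain ⟨k, hk⟩ : ∃ k, nilpotencyClass T = k + 2 :=
    ⟨nilpotencyClass T - 2, by
      have := pos_nilpotencyClass_iff.mpr hT
      have := mt nilpotencyClass_eq_one.mp hT0
      omega⟩
  obtain ⟨hTk2, hTk1⟩ := nilpotencyClass_eq_succ_iff.mp hk
  obtain ⟨w, hw⟩ : ∃ w, (T ^ (k + 1)) w ≠ 0 := by
    by_contra! h
    exact hTk1 (LinearMap.ext h)
  have hw_ker : (T ^ (k + 1)) w ∈ LinearMap.ker T := by
    rw [LinearMap.mem_ker, ← Module.End.mul_apply, ← pow_succ', hTk2, LinearMap.zero_apply]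
  obtain ⟨c, hc⟩ := Submodule.mem_span_singleton.mp (hker hw_ker)
  have hc0 : c ≠ 0 := by
    rintro rfl
    exact hw (by rw [← hc, zero_smul])
  refine ⟨c⁻¹ • (T ^ k) w, ?_⟩
  rw [map_smul, ← Module.End.mul_apply, ← pow_succ', ← hc, smul_smul, inv_mul_cancel₀ hc0,
    one_smul]

theorem apply_eq_self_of_pow_char_eq_self {F : Type*} [Field F] (p : ℕ) [Fact p.Prime]
    [CharP F p] (σ : F →+* F) {z : F} (hz : z ^ p = z) : σ z = z := by
  obtain ⟨k, rfl⟩ : z ∈ (ZMod.castHom (dvd_refl p) F).fieldRange := by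
    rw [ZMod.fieldRange_castHom_eq_bot]
    exact (Subfield.mem_bot_iff_pow_eq_self F p).mpr hz
  exact RingHom.congr_fun (RingHom.ext_zmod (σ.comp _) _) k

theorem apply_sub_self_eq_of_pow_char_sub_self_eq {F : Type*} [Field F] (p : ℕ) [Fact p.Prime]
    [CharP F p] (σ : F →+* F) {x y : F} (h : y ^ p - y = x ^ p - x) :
    σ y - y = σ x - x := by
  have hfix : (y - x) ^ p = y - x := by
    rw [sub_pow_char]
    linear_combination h
  have := apply_eq_self_of_pow_char_eq_self p σ hfix
  rw [map_sub] at this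
  linear_combination this

section Galois

variable {E F : Type*} [Field E] [Field F] [Algebra E F] [IsGalois E F] [FiniteDimensional E F]

theorem mem_bot_iff_apply_eq_self_of_zpowers_eq_top {σ : Gal(F/E)}
    (hσ : Subgroup.zpowers σ = ⊤) (z : F) : z ∈ (⊥ : IntermediateField E F) ↔ σ z = z := by
  rw [IsGalois.mem_bot_iff_fixed]
  refine ⟨fun h ↦ h σ, fun h τ ↦ ?_⟩
  have hstab : Subgroup.zpowers σ ≤ MulAction.stabilizer Gal(F/E) z :=
    Subgroup.zpowers_le.mpr h
  exact hstab (hσ ▸ Subgroup.mem_top τ)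

theorem exists_apply_eq_add_one_of_card_eq_char (p : ℕ) [Fact p.Prime] [CharP E p]
    (hcard : Nat.card Gal(F/E) = p) {σ : Gal(F/E)} (hσ : σ ≠ 1) : ∃ x : F, σ x = x + 1 := by
  have : CharP (Module.End E F) p :=
    charP_of_injective_algebraMap (algebraMap E (Module.End E F)).injective p
  set T : Module.End E F := σ.toLinearMap - 1
  have hT : IsNilpotent T := ⟨p, by
    rw [sub_pow_char_of_commute _ (Commute.one_right _), one_pow, ← AlgEquiv.pow_toLinearMap,
      ← hcard, pow_card_eq_one', AlgEquiv.one_toLinearMap, sub_self]⟩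
  have hT0 : T ≠ 0 := by
    refine fun h ↦ hσ (AlgEquiv.ext fun z ↦ ?_)
    simpa [T, sub_eq_zero] using LinearMap.congr_fun h z
  have hker : LinearMap.ker T ≤ E ∙ (1 : F) := by
    intro z hz
    have hσz : σ z = z := by simpa [T, sub_eq_zero] using hz
    have hz_bot : z ∈ (⊥ : IntermediateField E F) := by
      rwa [mem_bot_iff_apply_eq_self_of_zpowers_eq_top (zpowers_eq_top_of_prime_card hcard hσ)]
    obtain ⟨e, rfl⟩ := IntermediateField.mem_bot.mp hz_bot
    exact Submodule.mem_span_singleton.mpr ⟨e, Algebra.algebraMap_eq_smul_one e |>.symm⟩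
  obtain ⟨x, hx⟩ := LinearMap.mem_range_of_isNilpotent_of_ker_le_span hT hT0 hker
  exact ⟨x, by simpa [T, sub_eq_iff_eq_add'] using hx⟩

end Galois

/-- **Artin–Schreier theory.** Let `E` be a field of characteristic
`p > 0` and `F/E` a Galois extension of degree `p`.  Then there exists `a₀ ∈ E` such
that for every `a ∈ a₀ + {c^p - c : c ∈ E}` and every `x ∈ F` with `x^p - x = a`, one
has `F = E(x)`. -/
theorem artinSchreier_generator
    (E F : Type) [Field E] [Field F] [Algebra E F] [IsGalois E F]
    (p : ℕ) [hp : Fact p.Prime] [CharP E p]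
    (hdeg : Module.finrank E F = p) :
    ∃ a₀ : E, ∀ a : E, (∃ c : E, a = a₀ + (c ^ p - c)) →
      ∀ x : F, x ^ p - x = algebraMap E F a →
        IntermediateField.adjoin E {x} = ⊤ := by
  have : FiniteDimensional E F := Module.finite_of_finrank_pos (hdeg ▸ hp.out.pos)
  have : CharP F p := charP_of_injective_algebraMap (algebraMap E F).injective p
  have hcard : Nat.card Gal(F/E) = p := (IsGalois.card_aut_eq_finrank E F).trans hdeg
  have : Nontrivial Gal(F/E) := Finite.one_lt_card_iff_nontrivial.mp (hcard ▸ hp.out.one_lt)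
  obtain ⟨σ, hσ⟩ := exists_ne (1 : Gal(F/E))
  have hbot := mem_bot_iff_apply_eq_self_of_zpowers_eq_top (zpowers_eq_top_of_prime_card hcard hσ)
  obtain ⟨x, hx⟩ := exists_apply_eq_add_one_of_card_eq_char p hcard hσ
  have hx_bot : x ^ p - x ∈ (⊥ : IntermediateField E F) := by
    rw [hbot, map_sub, map_pow, hx, add_pow_char, one_pow]
    ring
  obtain ⟨a₀, ha₀⟩ := IntermediateField.mem_bot.mp hx_bot
  refine ⟨a₀, ?_⟩
  rintro a ⟨c, rfl⟩ y hy
  have hσy : σ y - y = 1 := by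
    have := apply_sub_self_eq_of_pow_char_sub_self_eq p σ (x := x + algebraMap E F c) (y := y)
      (by rw [hy, add_pow_char, map_add, ha₀, map_sub, map_pow]; ring)
    simpa [hx] using this
  have hy_bot : y ∉ (⊥ : IntermediateField E F) := by
    rw [hbot]
    intro h
    simp [h] at hσy
  have := isSimpleOrder_of_finrank_prime E F (hdeg ▸ hp.out)
  exact (eq_bot_or_eq_top _).resolve_left (mt adjoin_simple_eq_bot_iff.mp hy_bot)
end
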